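/- arXiv:2302.02363 — 3 statements merged into one kernel-verified Lean document; each statement's English description precedes it below -/
import Mathlib

section
/- For any binary word y of length n, there exists a word x of length n containing no run of k+1 consecutive zeros such that the Hamming distance d(x,y) is at most ⌈n/(k+1)⌉. -/
/-- `x` contains no run of `k+1` consecutive zeros. -/
def NoZeroRun (k n : ℕ) (x : Fin n → Fin 2) : Prop :=
  ∀ i : ℕ, i + k < n → ∃ j : Fin n, i ≤ j.1 ∧ j.1 ≤ i + k ∧ x j ≠ 0

theorem stmt_0 (k n : ℕ) (hk : 1 ≤ k) (hn : 1 ≤ n) (y : Fin n → Fin 2) :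
    ∃ x : Fin n → Fin 2, NoZeroRun k n x ∧ hammingDist x y ≤ (n + k) / (k + 1) := by
  classical
  set x : Fin n → Fin 2 := fun j => if (j.1 + 1) % (k + 1) = 0 then 1 else y j with hx
  refine ⟨x, ?_, ?_⟩
  · intro i hi
    set q := (i + k + 1) / (k + 1) with hq
    have hqm : (k + 1) * q + (i + k + 1) % (k + 1) = i + k + 1 := Nat.div_add_mod _ _
    have hr : (i + k + 1) % (k + 1) < k + 1 := Nat.mod_lt _ (by omega)
    set m := (k + 1) * q with hm
    have h1 : i + 1 ≤ m := by omega
    have h2 : m ≤ i + k + 1 := by omega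
    have hmlt : m - 1 < n := by omega
    refine ⟨⟨m - 1, hmlt⟩, show i ≤ m - 1 by omega, show m - 1 ≤ i + k by omega, ?_⟩
    have : (m - 1 + 1) % (k + 1) = 0 := by
      have : m - 1 + 1 = m := by omega
      rw [this, hm, Nat.mul_mod_right]
    simp only [hx, this, if_pos]
    decide
  · have hsub : (Finset.univ.filter fun j : Fin n => x j ≠ y j) ⊆
        Finset.univ.filter fun j : Fin n => (j.1 + 1) % (k + 1) = 0 := by
      intro j hj
      simp only [Finset.mem_filter, Finset.mem_univ, true_and] at hj ⊢
      by_contra h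
      exact hj (by simp [hx, h])
    have hcard : (Finset.univ.filter fun j : Fin n => (j.1 + 1) % (k + 1) = 0).card
        ≤ n / (k + 1) := by
      rw [← Finset.card_range (n / (k + 1))]
      refine Finset.card_le_card_of_injOn (fun j : Fin n => (j.1 + 1) / (k + 1) - 1) ?_ ?_
      · intro j hj
        simp only [Finset.mem_coe, Finset.mem_filter, Finset.mem_univ, true_and] at hj
        have hd : (k + 1) ∣ (j.1 + 1) := Nat.dvd_of_mod_eq_zero hj
        have ht : (j.1 + 1) / (k + 1) * (k + 1) = j.1 + 1 := Nat.div_mul_cancel hd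
        have hjn : j.1 + 1 ≤ n := j.2
        have htle : (j.1 + 1) / (k + 1) ≤ n / (k + 1) := Nat.div_le_div_right hjn
        have ht1 : 1 ≤ (j.1 + 1) / (k + 1) := by
          rcases Nat.eq_zero_or_pos ((j.1 + 1) / (k + 1)) with h | h
          · rw [h] at ht; omega
          · exact h
        simp only [Finset.mem_coe, Finset.mem_range]
        omega
      · intro a ha b hb hab
        simp only [Finset.mem_coe, Finset.mem_filter, Finset.mem_univ, true_and] at ha hb
        have hda : (k + 1) ∣ (a.1 + 1) := Nat.dvd_of_mod_eq_zero ha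
        have hdb : (k + 1) ∣ (b.1 + 1) := Nat.dvd_of_mod_eq_zero hb
        have hta : (a.1 + 1) / (k + 1) * (k + 1) = a.1 + 1 := Nat.div_mul_cancel hda
        have htb : (b.1 + 1) / (k + 1) * (k + 1) = b.1 + 1 := Nat.div_mul_cancel hdb
        have ha1 : 1 ≤ (a.1 + 1) / (k + 1) := by
          rcases Nat.eq_zero_or_pos ((a.1 + 1) / (k + 1)) with h | h
          · rw [h] at hta; omega
          · exact h
        have hb1 : 1 ≤ (b.1 + 1) / (k + 1) := by
          rcases Nat.eq_zero_or_pos ((b.1 + 1) / (k + 1)) with h | h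
          · rw [h] at htb; omega
          · exact h
        simp only at hab
        have heq : (a.1 + 1) / (k + 1) = (b.1 + 1) / (k + 1) := by omega
        rw [heq] at hta
        exact Fin.ext (by omega)
    calc hammingDist x y ≤ (Finset.univ.filter fun j : Fin n => (j.1 + 1) % (k + 1) = 0).card :=
          Finset.card_le_card hsub
      _ ≤ n / (k + 1) := hcard
      _ ≤ (n + k) / (k + 1) := Nat.div_le_div_right (by omega)
end

section
/- For every k ≥ 1, the infinite sum ∑_{i=k+1}^{∞} ⌊i/(k+1)⌋ · 2^{-(i+2)} equals 1/(2(2^{k+1}-1)). -/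
set_option maxHeartbeats 1000000 in
theorem stmt_9 (k : ℕ) (hk : 1 ≤ k) :
    ∑' i : ℕ, (((i + (k + 1)) / (k + 1) : ℕ) : ℝ) / 2 ^ (i + (k + 1) + 2)
      = 1 / (2 * (2 ^ (k + 1) - 1)) := by
  set m := k + 1 with hm_def
  have hm : 0 < m := Nat.succ_pos k
  haveI : NeZero m := ⟨hm.ne'⟩
  set x : ℝ := (1 / 2 : ℝ) ^ m with hx_def
  have hx0 : (0 : ℝ) ≤ x := by positivity
  have hx1 : x < 1 := by
    apply pow_lt_one₀ (by norm_num) (by norm_num) hm.ne'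
  have h1x : (1 : ℝ) - x ≠ 0 := by linarith
  -- geometric-type sum over quotients
  have hg : HasSum (fun q : ℕ => ((q : ℝ) + 1) * x ^ q) (1 / (1 - x) ^ 2) := by
    have hxnorm : ‖x‖ < 1 := by rw [Real.norm_eq_abs, abs_of_nonneg hx0]; exact hx1
    have h1 := hasSum_coe_mul_geometric_of_norm_lt_one hxnorm
    have h2 := hasSum_geometric_of_norm_lt_one hxnorm
    have : HasSum (fun q : ℕ => (q : ℝ) * x ^ q + x ^ q) (x / (1 - x) ^ 2 + (1 - x)⁻¹) := h1.add h2
    convert this using 1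
    · funext q; ring
    · field_simp
      ring
  -- finite geometric sum over remainders
  have hh : HasSum (fun r : Fin m => ((1 / 2 : ℝ)) ^ (r : ℕ)) (2 * (1 - x)) := by
    have := hasSum_fintype (fun r : Fin m => ((1 / 2 : ℝ)) ^ (r : ℕ))
    convert this using 1
    rw [Fin.sum_univ_eq_sum_range (fun i => ((1 / 2 : ℝ)) ^ i), geom_sum_eq (by norm_num)]
    rw [hx_def]
    field_simp
    ring
  -- summability of the product
  have hsum : Summable (fun p : ℕ × Fin m =>
      (((p.1 : ℝ) + 1) * x ^ p.1) * ((1 / 2 : ℝ)) ^ ((p.2 : Fin m) : ℕ)) :=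
    Summable.mul_of_nonneg hg.summable hh.summable
      (fun q => by positivity) (fun r => by positivity)
  have hprod : HasSum (fun p : ℕ × Fin m =>
      (((p.1 : ℝ) + 1) * x ^ p.1) * ((1 / 2 : ℝ)) ^ ((p.2 : Fin m) : ℕ))
      (1 / (1 - x) ^ 2 * (2 * (1 - x))) := hg.mul hh hsum
  -- transfer through the div/mod equivalence
  have hF : HasSum (fun i : ℕ => ((i / m + 1 : ℕ) : ℝ) * (1 / 2 : ℝ) ^ i)
      (1 / (1 - x) ^ 2 * (2 * (1 - x))) := by
    rw [← (Nat.divModEquiv m).symm.hasSum_iff]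
    convert hprod using 1
    funext p
    obtain ⟨q, r⟩ := p
    simp only [Function.comp_apply, Nat.divModEquiv_symm_apply]
    have hdiv : (q * m + (r : ℕ)) / m = q := by
      rw [mul_comm, Nat.mul_add_div hm, Nat.div_eq_of_lt r.is_lt, add_zero]
    rw [hdiv]
    push_cast
    rw [pow_add, mul_comm q m, pow_mul, ← hx_def]
    ring
  -- multiply by the constant factor
  have hF2 := hF.mul_right ((1 / 2 : ℝ) ^ (m + 2))
  have heq : (fun i : ℕ => (((i + m) / m : ℕ) : ℝ) / 2 ^ (i + m + 2))
      = fun i : ℕ => ((i / m + 1 : ℕ) : ℝ) * (1 / 2 : ℝ) ^ i * (1 / 2 : ℝ) ^ (m + 2) := by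
    funext i
    rw [Nat.add_div_right _ hm]
    rw [show i + m + 2 = i + (m + 2) by ring, mul_assoc, ← pow_add]
    rw [div_pow, one_pow, div_eq_mul_inv, one_div]
  rw [heq]
  rw [hF2.tsum_eq]
  have hy : (2 : ℝ) ^ m ≠ 0 := by positivity
  have hy1 : (2 : ℝ) ^ m - 1 ≠ 0 := by
    have : (1 : ℝ) < 2 ^ m := one_lt_pow₀ (by norm_num) hm.ne'
    linarith
  rw [hx_def]
  rw [div_pow, one_pow, div_pow, one_pow]
  have h1x' : (1 : ℝ) - 1 / 2 ^ m ≠ 0 := by rwa [hx_def, div_pow, one_pow] at h1x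
  field_simp
  ring
end

section
/- Let y ∈ {0,1}^n, let x ∈ {0,1}^n contain no run of k+1 consecutive zeros, and suppose y contains an occurrence of the pattern 1 0^i 1 starting at position m (i.e., y_m = 1, y_{m+1} = ... = y_{m+i} = 0, y_{m+i+1} = 1) with i ≥ k+1. Then x and y differ in at least ⌊i/(k+1)⌋ positions among {m+1, ..., m+i}. -/
theorem stmt_11 (k n m i : ℕ) (hk : 1 ≤ k) (hi : k + 1 ≤ i)
    (x y : Fin n → Fin 2) (hx : NoZeroRun k n x)
    (hmn : m + i + 1 < n)
    (hy1 : y ⟨m, by omega⟩ = 1)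
    (hy0 : ∀ l : ℕ, ∀ h : m + 1 ≤ l ∧ l ≤ m + i, y ⟨l, by omega⟩ = 0)
    (hy2 : y ⟨m + i + 1, by omega⟩ = 1) :
    i / (k + 1) ≤
      (Finset.univ.filter
        (fun l : Fin n => m + 1 ≤ l.1 ∧ l.1 ≤ m + i ∧ x l ≠ y l)).card := by
  classical
  set q := i / (k + 1) with hq
  have hblock : ∀ t, t < q → t * (k + 1) + k + 1 ≤ i := by
    intro t ht
    have h1 : (t + 1) * (k + 1) ≤ q * (k + 1) :=
      Nat.mul_le_mul_right _ ht
    have h2 : q * (k + 1) ≤ i := Nat.div_mul_le_self i (k + 1)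
    have : (t + 1) * (k + 1) = t * (k + 1) + k + 1 := by ring
    omega
  have key : ∀ t, t < q → ∃ j : Fin n,
      m + 1 + t * (k + 1) ≤ j.1 ∧ j.1 ≤ m + 1 + t * (k + 1) + k ∧ x j ≠ 0 := by
    intro t ht
    exact hx (m + 1 + t * (k + 1)) (by have := hblock t ht; omega)
  choose f hf1 hf2 hf3 using key
  have hn : 0 < n := by omega
  let g : ℕ → Fin n := fun t => if h : t < q then f t h else ⟨0, hn⟩
  have hg1 : ∀ t, t < q → m + 1 + t * (k + 1) ≤ (g t).1 := by
    intro t ht; simp only [g, dif_pos ht]; exact hf1 t ht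
  have hg2 : ∀ t, t < q → (g t).1 ≤ m + 1 + t * (k + 1) + k := by
    intro t ht; simp only [g, dif_pos ht]; exact hf2 t ht
  have hg3 : ∀ t, t < q → x (g t) ≠ 0 := by
    intro t ht; simp only [g, dif_pos ht]; exact hf3 t ht
  have hcard : (Finset.range q).card ≤
      (Finset.univ.filter
        (fun l : Fin n => m + 1 ≤ l.1 ∧ l.1 ≤ m + i ∧ x l ≠ y l)).card := by
    apply Finset.card_le_card_of_injOn g
    · intro t ht
      rw [Finset.mem_coe, Finset.mem_range] at ht
      have h1 := hg1 t ht
      have h2 := hg2 t ht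
      have hb := hblock t ht
      have hrange : m + 1 ≤ (g t).1 ∧ (g t).1 ≤ m + i := by omega
      have hy : y (g t) = 0 := by
        have := hy0 (g t).1 hrange
        convert this using 2
      simp only [Finset.mem_coe, Finset.mem_filter, Finset.mem_univ, true_and]
      refine ⟨hrange.1, hrange.2, ?_⟩
      rw [hy]; exact hg3 t ht
    · intro a ha b hb hab
      rw [Finset.mem_coe, Finset.mem_range] at ha hb
      by_contra hne
      rcases Nat.lt_or_ge a b with h | h
      · have h1 := hg2 a ha
        have h2 := hg1 b hb
        have : (a + 1) * (k + 1) ≤ b * (k + 1) := Nat.mul_le_mul_right _ h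
        have he : (a + 1) * (k + 1) = a * (k + 1) + k + 1 := by ring
        have : (g a).1 < (g b).1 := by omega
        rw [hab] at this; omega
      · have hba : b < a := by omega
        have h1 := hg2 b hb
        have h2 := hg1 a ha
        have : (b + 1) * (k + 1) ≤ a * (k + 1) := Nat.mul_le_mul_right _ hba
        have he : (b + 1) * (k + 1) = b * (k + 1) + k + 1 := by ring
        have : (g b).1 < (g a).1 := by omega
        rw [hab] at this; omega
  simpa using hcard
end
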